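/- Let X be a C–D imprimitivity bimodule and m ∈ M(X) with ⟨m,m⟩_C = 1 and ⟨m,m⟩_D = 1. Then the map α : D → C defined by α(d) = ⟨m·d, m⟩_C is a *-isomorphism of C*-algebras; in particular it is multiplicative: ⟨m·(ab), m⟩_C = ⟨m·a, m⟩_C ⟨m·b, m⟩_C for a, b ∈ D. -/

import Mathlib

/-!
The map `d ↦ m d m*` has inverse `c ↦ m* c m`, and since `m* m` acts as a unit on `D` and `m m*`
on `C`, all the algebraic identities are immediate. The one analytic point is that `z m* ∈ C` and
`m* z ∈ D` for `z ∈ X`. For `a = z* z` the elements `eₙ = 1 - (1 - a / ‖a‖)ⁿ` lie in `D` (they are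
polynomials in `a` without constant term), and `‖z - z eₙ‖² = ‖a (1 - a / ‖a‖)²ⁿ‖ ≤ ‖a‖ / (2n + 1)`
by the continuous functional calculus; hence `z m* = lim z eₙ m* = lim z (m eₙ*)* ∈ C`.
Applied to `z*`, with the roles of `C` and `D` exchanged, the same argument gives `m* z ∈ D`.
-/

open Filter Topology

lemma mul_one_sub_pow_le {t : ℝ} (ht₀ : 0 ≤ t) (ht₁ : t ≤ 1) (k : ℕ) :
    (k + 1) * (t * (1 - t) ^ k) ≤ 1 := by
  have hbern : 1 + k * t ≤ (1 + t) ^ k := one_add_mul_le_pow (by linarith) k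
  have hprod : (1 + t) ^ k * (1 - t) ^ k ≤ 1 := by
    rw [← mul_pow]
    exact pow_le_one₀ (by nlinarith) (by nlinarith)
  have hpow : (1 + k * t) * (1 - t) ^ k ≤ 1 :=
    (mul_le_mul_of_nonneg_right hbern (pow_nonneg (by linarith) k)).trans hprod
  nlinarith [pow_nonneg (sub_nonneg.2 ht₁) k]

lemma one_sub_one_sub_smul_pow_mem {R A : Type*} [CommRing R] [Ring A] [Algebra R A]
    (S : Submodule R A) {a : A} (ha : a ∈ S) (hmul : ∀ s ∈ S, s * a ∈ S) (c : R) (n : ℕ) :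
    1 - (1 - c • a) ^ n ∈ S := by
  induction n with
  | zero => simp
  | succ n ih =>
    have key : 1 - (1 - c • a) ^ (n + 1) =
        (1 - (1 - c • a) ^ n) + c • (a - (1 - (1 - c • a) ^ n) * a) := by
      rw [show a - (1 - (1 - c • a) ^ n) * a = (1 - c • a) ^ n * a by noncomm_ring,
        ← mul_smul_comm, pow_succ]
      noncomm_ring
    rw [key]
    exact add_mem ih (S.smul_mem c (sub_mem ha (hmul _ ih)))

section ClosureSpan

variable {R E : Type*} [CommSemiring R] [TopologicalSpace E]

lemma star_mem_closure_span [StarRing R] [AddCommMonoid E] [StarAddMonoid E] [Module R E]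
    [StarModule R E] [ContinuousStar E] {T : Set E} (hT : ∀ t ∈ T, star t ∈ T) {x : E}
    (hx : x ∈ closure (Submodule.span R T : Set E)) :
    star x ∈ closure (Submodule.span R T : Set E) :=
  map_mem_closure continuous_star hx fun y hy => by
    have := Submodule.mem_map_of_mem (f := (starLinearEquiv R (A := E)).toLinearMap) hy
    rw [Submodule.map_span] at this
    exact Submodule.span_mono (Set.image_subset_iff.2 hT) this

lemma mul_mem_closure_span [Semiring E] [Algebra R E] [ContinuousMul E] {T : Set E} {a : E}
    (hT : ∀ t ∈ T, t * a ∈ T) {x : E} (hx : x ∈ closure (Submodule.span R T : Set E)) :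
    x * a ∈ closure (Submodule.span R T : Set E) :=
  map_mem_closure (f := (· * a)) (continuous_mul_const a) hx fun y hy => by
    have := Submodule.mem_map_of_mem (f := LinearMap.mulRight R a) hy
    rw [Submodule.map_span] at this
    exact Submodule.span_mono (Set.image_subset_iff.2 hT) this

end ClosureSpan

section CStarAlgebra

variable {E : Type*} [CStarAlgebra E]

lemma sq_norm_mul_one_sub_smul_pow_le (z : E) (n : ℕ) :
    (2 * n + 1) * ‖z * (1 - ‖star z * z‖⁻¹ • (star z * z)) ^ n‖ ^ 2 ≤ ‖star z * z‖ := by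
  set a := star z * z with ha_def
  set b : E := 1 - ‖a‖⁻¹ • a
  have ha : IsSelfAdjoint a := .star_mul_self z
  have hb : IsSelfAdjoint b := .sub (.one E) (.smul (star_trivial _) ha)
  have hab : Commute a b := (Commute.one_right a).sub_right ((Commute.refl a).smul_right _)
  have hsq : ‖z * b ^ n‖ ^ 2 = ‖a * b ^ (2 * n)‖ := by
    rw [sq, ← CStarRing.norm_star_mul_self, star_mul, (hb.pow n).star_eq, two_mul, pow_add,
      ← mul_assoc, mul_assoc _ (star z), ← ha_def, ← (hab.pow_right n).eq]
    noncomm_ring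
  have hcfc : a * b ^ (2 * n) = cfc (fun x : ℝ => x * (1 - ‖a‖⁻¹ * x) ^ (2 * n)) a := by
    rw [cfc_mul _ _ a, cfc_pow _ _ a, cfc_sub _ _ a, cfc_const_one ℝ a,
      cfc_const_mul_id _ a, cfc_id' ℝ a]
  rcases (norm_nonneg a).eq_or_lt with ha0 | ha0
  · have : a = 0 := norm_eq_zero.1 ha0.symm
    rw [hsq, this, zero_mul, norm_zero, mul_zero]
  have : Nontrivial E := nontrivial_of_ne a 0 (norm_pos_iff.1 ha0)
  have hbound : ‖a * b ^ (2 * n)‖ ≤ ‖a‖ / (2 * n + 1) := by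
    rw [hcfc]
    refine norm_cfc_le (by positivity) fun x hx => ?_
    have hx₀ : 0 ≤ x := spectrum_star_mul_self_nonneg x hx
    have hxa : x ≤ ‖a‖ := by
      simpa [abs_of_nonneg hx₀] using spectrum.norm_le_norm_of_mem hx
    have ht₁ : ‖a‖⁻¹ * x ≤ 1 := by rwa [inv_mul_le_iff₀ ha0, mul_one]
    have ht := mul_one_sub_pow_le (by positivity) ht₁ (2 * n)
    rw [Real.norm_of_nonneg (mul_nonneg hx₀ (pow_nonneg (sub_nonneg.2 ht₁) _)),
      le_div_iff₀ (by positivity)]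
    push_cast at ht
    calc x * (1 - ‖a‖⁻¹ * x) ^ (2 * n) * (2 * n + 1)
        = ‖a‖ * ((2 * n + 1) * (‖a‖⁻¹ * x * (1 - ‖a‖⁻¹ * x) ^ (2 * n))) := by
          field_simp
      _ ≤ ‖a‖ := mul_le_of_le_one_right ha0.le ht
  rw [hsq]
  rwa [le_div_iff₀' (by positivity)] at hbound

lemma tendsto_mul_one_sub_one_sub_smul_pow (z : E) :
    Tendsto (fun n : ℕ => z * (1 - (1 - ‖star z * z‖⁻¹ • (star z * z)) ^ n)) atTop (𝓝 z) := by
  set a := star z * z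
  have hden : Tendsto (fun n : ℕ => (2 * n + 1 : ℝ)) atTop atTop :=
    tendsto_atTop_add_const_right _ _ (tendsto_natCast_atTop_atTop.const_mul_atTop two_pos)
  have hsqrt : Tendsto (fun n : ℕ => √(‖a‖ / (2 * n + 1))) atTop (𝓝 0) := by
    simpa using (tendsto_const_nhds (x := ‖a‖).div_atTop hden).sqrt
  have hrem : Tendsto (fun n : ℕ => z * (1 - ‖a‖⁻¹ • a) ^ n) atTop (𝓝 0) := by
    refine squeeze_zero_norm (fun n => ?_) hsqrt
    rw [Real.le_sqrt (norm_nonneg _) (by positivity), le_div_iff₀' (by positivity)]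
    exact sq_norm_mul_one_sub_smul_pow_le z n
  simpa [mul_sub] using tendsto_const_nhds.sub hrem

lemma IsClosed.mul_mem_of_mul_mem_mul_mul_mem {S : Set E} (hS : IsClosed S) {D : Submodule ℂ E}
    {z w : E} (hz : star z * z ∈ D) (hzD : ∀ d ∈ D, d * (star z * z) ∈ D)
    (hSD : ∀ d ∈ D, z * d * w ∈ S) : z * w ∈ S :=
  hS.mem_of_tendsto ((tendsto_mul_one_sub_one_sub_smul_pow z).mul_const w)
    (Eventually.of_forall fun n =>
      hSD _ (one_sub_one_sub_smul_pow_mem (D.restrictScalars ℝ) hz hzD _ n))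

variable {X : Submodule ℂ E}

variable (X) in
noncomputable def Submodule.closedSpanMulStar : Submodule ℂ E :=
  (Submodule.span ℂ {w : E | ∃ x ∈ X, ∃ y ∈ X, w = x * star y}).topologicalClosure

variable (X) in
noncomputable def Submodule.closedSpanStarMul : Submodule ℂ E :=
  (Submodule.span ℂ {w : E | ∃ x ∈ X, ∃ y ∈ X, w = star x * y}).topologicalClosure

namespace Submodule

lemma isClosed_closedSpanMulStar : IsClosed (X.closedSpanMulStar : Set E) :=
  isClosed_topologicalClosure _

lemma isClosed_closedSpanStarMul : IsClosed (X.closedSpanStarMul : Set E) :=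
  isClosed_topologicalClosure _

lemma mul_star_mem_closedSpanMulStar {x y : E} (hx : x ∈ X) (hy : y ∈ X) :
    x * star y ∈ X.closedSpanMulStar :=
  le_topologicalClosure _ (subset_span ⟨x, hx, y, hy, rfl⟩)

lemma star_mul_mem_closedSpanStarMul {x y : E} (hx : x ∈ X) (hy : y ∈ X) :
    star x * y ∈ X.closedSpanStarMul :=
  le_topologicalClosure _ (subset_span ⟨x, hx, y, hy, rfl⟩)

lemma star_mem_closedSpanMulStar {c : E} (hc : c ∈ X.closedSpanMulStar) :
    star c ∈ X.closedSpanMulStar :=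
  star_mem_closure_span (by rintro _ ⟨x, hx, y, hy, rfl⟩; exact ⟨y, hy, x, hx, by simp⟩) hc

lemma star_mem_closedSpanStarMul {d : E} (hd : d ∈ X.closedSpanStarMul) :
    star d ∈ X.closedSpanStarMul :=
  star_mem_closure_span (by rintro _ ⟨x, hx, y, hy, rfl⟩; exact ⟨y, hy, x, hx, by simp⟩) hd

variable (hXXX : ∀ x ∈ X, ∀ y ∈ X, ∀ z ∈ X, x * star y * z ∈ X)
include hXXX

lemma mul_mem_closedSpanMulStar {c z : E} (hc : c ∈ X.closedSpanMulStar) (hz : z ∈ X) :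
    c * (z * star z) ∈ X.closedSpanMulStar :=
  mul_mem_closure_span (by
    rintro _ ⟨x, hx, y, hy, rfl⟩
    exact ⟨x * star y * z, hXXX x hx y hy z hz, z, hz, by simp [mul_assoc]⟩) hc

lemma mul_mem_closedSpanStarMul {d z : E} (hd : d ∈ X.closedSpanStarMul) (hz : z ∈ X) :
    d * (star z * z) ∈ X.closedSpanStarMul :=
  mul_mem_closure_span (by
    rintro _ ⟨x, hx, y, hy, rfl⟩
    exact ⟨x, hx, y * star z * z, hXXX y hy z hz z hz, by simp [mul_assoc]⟩) hd

lemma mul_star_mem_closedSpanMulStar_of_mul_mem {m z : E}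
    (hmD : ∀ d ∈ X.closedSpanStarMul, m * d ∈ X) (hz : z ∈ X) :
    z * star m ∈ X.closedSpanMulStar :=
  isClosed_closedSpanMulStar.mul_mem_of_mul_mem_mul_mul_mem (star_mul_mem_closedSpanStarMul hz hz)
    (fun _ hd => mul_mem_closedSpanStarMul hXXX hd hz) fun d hd => by
      simpa [mul_assoc] using
        mul_star_mem_closedSpanMulStar hz (hmD _ (star_mem_closedSpanStarMul hd))

lemma star_mul_mem_closedSpanStarMul_of_mul_mem {m z : E}
    (hCm : ∀ c ∈ X.closedSpanMulStar, c * m ∈ X) (hz : z ∈ X) :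
    star m * z ∈ X.closedSpanStarMul := by
  have : star z * m ∈ X.closedSpanStarMul :=
    isClosed_closedSpanStarMul.mul_mem_of_mul_mem_mul_mul_mem (z := star z)
      (by simpa using mul_star_mem_closedSpanMulStar hz hz)
      (fun _ hc => by simpa using mul_mem_closedSpanMulStar hXXX hc hz) fun c hc => by
        simpa [mul_assoc] using star_mul_mem_closedSpanStarMul hz (hCm c hc)
  simpa using star_mem_closedSpanStarMul this

end Submodule

end CStarAlgebra

lemma Set.injOn_mul_mul {M : Type*} [Semigroup M] {D : Set M} {m m' : M}
    (hl : ∀ d ∈ D, m' * m * d = d) (hr : ∀ d ∈ D, d * (m' * m) = d) :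
    Set.InjOn (fun d => m * d * m') D := fun a ha b hb hab => by
  have key : ∀ d ∈ D, m' * (m * d * m') * m = d := fun d hd => by
    calc m' * (m * d * m') * m = m' * m * d * (m' * m) := by simp only [mul_assoc]
      _ = d := by rw [hl d hd, hr d hd]
  rw [← key a ha, ← key b hb]
  exact congrArg (m' * · * m) hab

theorem stmt_17_general {E : Type*} [NormedRing E] [StarRing E] [CStarRing E] [NormedAlgebra ℂ E]
    [CompleteSpace E] [StarModule ℂ E]
    (X : Submodule ℂ E)
    (hXXX : ∀ x ∈ X, ∀ y ∈ X, ∀ z ∈ X, x * star y * z ∈ X)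
    (C : Set E) (hC : C = closure (Submodule.span ℂ {w : E | ∃ x ∈ X, ∃ y ∈ X, w = x * star y} : Set E))
    (D : Set E) (hD : D = closure (Submodule.span ℂ {w : E | ∃ x ∈ X, ∃ y ∈ X, w = star x * y} : Set E))
    (m : E) (hCm : ∀ c ∈ C, c * m ∈ X) (hmD : ∀ d ∈ D, m * d ∈ X)
    (hmmC : ∀ c ∈ C, c * (m * star m) = c)
    (hmmD : ∀ d ∈ D, (star m * m) * d = d) :
    Set.BijOn (fun d => (m * d) * star m) D C ∧
    (∀ a ∈ D, ∀ b ∈ D, (m * (a + b)) * star m = (m * a) * star m + (m * b) * star m) ∧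
    (∀ a ∈ D, (m * star a) * star m = star ((m * a) * star m)) ∧
    (∀ a ∈ D, ∀ b ∈ D, (m * (a * b)) * star m = ((m * a) * star m) * ((m * b) * star m)) := by
  let _ : CStarAlgebra E := ⟨⟩
  rw [← Submodule.topologicalClosure_coe] at hC hD
  change C = X.closedSpanMulStar at hC
  change D = X.closedSpanStarMul at hD
  subst hC hD
  have hmmD' : ∀ d ∈ X.closedSpanStarMul, d * (star m * m) = d := fun d hd => by
    simpa [mul_assoc] using congrArg star (hmmD _ (Submodule.star_mem_closedSpanStarMul hd))
  have hmmC' : ∀ c ∈ X.closedSpanMulStar, m * star m * c = c := fun c hc => by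
    simpa [mul_assoc] using congrArg star (hmmC _ (Submodule.star_mem_closedSpanMulStar hc))
  refine ⟨⟨fun d hd => Submodule.mul_star_mem_closedSpanMulStar_of_mul_mem hXXX hmD (hmD d hd),
      Set.injOn_mul_mul hmmD hmmD', fun c hc => ⟨star m * (c * m),
        Submodule.star_mul_mem_closedSpanStarMul_of_mul_mem hXXX hCm (hCm c hc), ?_⟩⟩,
      fun a _ b _ => by noncomm_ring, fun a _ => by simp [mul_assoc], fun a _ b hb => ?_⟩
  · calc m * (star m * (c * m)) * star m = m * star m * c * (m * star m) := by noncomm_ring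
      _ = c := by rw [hmmC' c hc, hmmC c hc]
  · calc m * (a * b) * star m = m * (a * (star m * m * b)) * star m := by rw [hmmD b hb]
      _ = m * a * star m * (m * b * star m) := by noncomm_ring

/-- Let `X` be a `C`–`D` imprimitivity bimodule (realised concretely inside an ambient
C*-algebra `E`, with `C = closed span (X X*)`, `D = closed span (X* X)`), and let `m`
be a multiplier of `X` with `⟨m,m⟩_C = 1` and `⟨m,m⟩_D = 1`.  Then
`α : d ↦ ⟨m·d, m⟩_C = m d m*` is a *-isomorphism of `D` onto `C`; in particular it is
multiplicative: `⟨m·(ab), m⟩_C = ⟨m·a, m⟩_C ⟨m·b, m⟩_C` for `a, b ∈ D`. -/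
theorem stmt_17 {E : Type*} [NormedRing E] [StarRing E] [CStarRing E] [NormedAlgebra ℂ E]
    [CompleteSpace E] [StarModule ℂ E]
    (X : Submodule ℂ E) (hXc : IsClosed (X : Set E))
    (hXXX : ∀ x ∈ X, ∀ y ∈ X, ∀ z ∈ X, x * star y * z ∈ X)
    (C : Set E) (hC : C = closure (Submodule.span ℂ {w : E | ∃ x ∈ X, ∃ y ∈ X, w = x * star y} : Set E))
    (D : Set E) (hD : D = closure (Submodule.span ℂ {w : E | ∃ x ∈ X, ∃ y ∈ X, w = star x * y} : Set E))
    (m : E) (hCm : ∀ c ∈ C, c * m ∈ X) (hmD : ∀ d ∈ D, m * d ∈ X)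
    (hmmC : ∀ c ∈ C, c * (m * star m) = c)
    (hmmD : ∀ d ∈ D, (star m * m) * d = d) :
    Set.BijOn (fun d => (m * d) * star m) D C ∧
    (∀ a ∈ D, ∀ b ∈ D, (m * (a + b)) * star m = (m * a) * star m + (m * b) * star m) ∧
    (∀ a ∈ D, (m * star a) * star m = star ((m * a) * star m)) ∧
    (∀ a ∈ D, ∀ b ∈ D, (m * (a * b)) * star m = ((m * a) * star m) * ((m * b) * star m)) :=
  stmt_17_general X hXXX C hC D hD m hCm hmD hmmC hmmD
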